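/- arXiv:1410.1007 — 2 statements merged into one kernel-verified Lean document; each statement's English description precedes it below -/
import Mathlib

section
/- Let n ≥ 2 be an integer and let a = (a₁, …, a_n) ∈ Δ^(n). There exists a generalized n-system P on the interval [na₁, na_n] such that, for each j = 1, …, n−1, the infimum of ψ_j(q^{−1}P(q)) over q ∈ [na₁, na_n] equals ψ_j(a) and the supremum of ψ_j(q^{−1}P(q)) over q ∈ [na₁, na_n] equals j/n. -/
noncomputable section

/-- `D` is a discrete subset of `I`: every point of `I` has a neighbourhood
meeting `D` in at most itself. -/
def DiscreteIn (D I : Set ℝ) : Prop :=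
  D ⊆ I ∧ ∀ q ∈ I, ∃ ε > (0 : ℝ), D ∩ Set.Ioo (q - ε) (q + ε) ⊆ {q}

/-- The set of points of `I` at which `P` is not differentiable, including the
boundary points of `I` that lie in `I`. -/
def NonDiffSet (n : ℕ) (I : Set ℝ) (P : ℝ → Fin n → ℝ) : Set ℝ :=
  {q ∈ I | q ∈ frontier I ∨ ¬DifferentiableAt ℝ P q}

/-- `P` is continuous piecewise linear on `I`: it is continuous on `I`, the set `D`
of points of `I` at which it is not differentiable (including boundary points of `I`
lying in `I`) is a discrete subset of `I`, and its derivative is locally constant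
on `I \ D`. -/
def ContPiecewiseLinearOn (n : ℕ) (I : Set ℝ) (P : ℝ → Fin n → ℝ) : Prop :=
  ContinuousOn P I ∧
  DiscreteIn (NonDiffSet n I P) I ∧
  ∀ q ∈ I \ NonDiffSet n I P, ∃ ε > (0 : ℝ),
    ∀ x ∈ (I \ NonDiffSet n I P) ∩ Set.Ioo (q - ε) (q + ε), deriv P x = deriv P q

/-- An `n`-system on `I` (Definition 4.1): conditions (S1), (S2), (S3). -/
def IsNSystem (n : ℕ) (I : Set ℝ) (P : ℝ → Fin n → ℝ) : Prop :=
  ContPiecewiseLinearOn n I P ∧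
  -- (S1)
  (∀ q ∈ I, ((∀ i, 0 ≤ P q i) ∧ Monotone (P q)) ∧ ∑ i, P q i = q) ∧
  -- (S2)
  (∀ a b : ℝ, a < b → Set.Ioo a b ⊆ I →
    (∀ q ∈ Set.Ioo a b, DifferentiableAt ℝ P q) →
    ∃ r : Fin n, (∀ q ∈ Set.Ioo a b, deriv (fun x => P x r) q = 1) ∧
      ∀ j : Fin n, j ≠ r → ∀ p ∈ Set.Ioo a b, ∀ q ∈ Set.Ioo a b, P p j = P q j) ∧
  -- (S3)
  (∀ q ∈ interior I, ¬DifferentiableAt ℝ P q →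
    ∀ r s : Fin n, derivWithin (fun x => P x r) (Set.Iic q) q = 1 →
      derivWithin (fun x => P x s) (Set.Ici q) q = 1 → r < s →
      ∀ i : Fin n, r ≤ i → i ≤ s → P q i = P q r)

/-- A generalized `n`-system on `I` (Definition 4.4): conditions (G1), (G2), (G3). -/
def IsGenNSystem (n : ℕ) (I : Set ℝ) (P : ℝ → Fin n → ℝ) : Prop :=
  ContPiecewiseLinearOn n I P ∧
  -- (G1)
  (∀ q ∈ I, ((∀ i, 0 ≤ P q i) ∧ Monotone (P q)) ∧ ∑ i, P q i = q) ∧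
  -- (G2)
  (∀ a b : ℝ, a < b → Set.Ioo a b ⊆ I →
    (∀ q ∈ Set.Ioo a b, DifferentiableAt ℝ P q) →
    ∃ rlo rhi : Fin n, rlo ≤ rhi ∧
      (∀ j : Fin n, rlo ≤ j → j ≤ rhi → ∀ q ∈ Set.Ioo a b,
        P q j = P q rlo ∧
        deriv (fun x => P x j) q = 1 / (((rhi : ℕ) : ℝ) - ((rlo : ℕ) : ℝ) + 1)) ∧
      (∀ j : Fin n, j < rlo ∨ rhi < j →
        ∀ p ∈ Set.Ioo a b, ∀ q ∈ Set.Ioo a b, P p j = P q j)) ∧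
  -- (G3)
  (∀ q ∈ interior I, ¬DifferentiableAt ℝ P q →
    ∀ rlo rhi slo shi : Fin n, rlo ≤ rhi → slo ≤ shi →
      (∀ j : Fin n, rlo ≤ j → j ≤ rhi →
        derivWithin (fun x => P x j) (Set.Iic q) q
          = 1 / (((rhi : ℕ) : ℝ) - ((rlo : ℕ) : ℝ) + 1)) →
      (∀ j : Fin n, slo ≤ j → j ≤ shi →
        derivWithin (fun x => P x j) (Set.Ici q) q
          = 1 / (((shi : ℕ) : ℝ) - ((slo : ℕ) : ℝ) + 1)) →
      rlo < shi →
      ∀ i : Fin n, rlo ≤ i → i ≤ shi → P q i = P q rlo)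

/-- `ψ_j(a) = a₁ + ⋯ + a_j` (sum of the first `j` coordinates). -/
def psiSum (m j : ℕ) (x : Fin m → ℝ) : ℝ := ∑ i : Fin m, if (i : ℕ) < j then x i else 0

/-- The closed simplex `Δ̄⁽ᵐ⁾ = {a : 0 ≤ a₁ ≤ ⋯ ≤ a_m, a₁ + ⋯ + a_m = 1}`. -/
def DeltaBar (m : ℕ) : Set (Fin m → ℝ) :=
  {a | (∀ i, 0 ≤ a i) ∧ Monotone a ∧ ∑ i, a i = 1}

/-- The open simplex `Δ⁽ᵐ⁾ = {a : 0 < a₁ < ⋯ < a_m, a₁ + ⋯ + a_m = 1}`. -/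
def DeltaStrict (m : ℕ) : Set (Fin m → ℝ) :=
  {a | (∀ i, 0 < a i) ∧ StrictMono a ∧ ∑ i, a i = 1}

/-!
The system is water-filling over the floor `α a`, `α = n a₁`: `P(q)ᵢ = max (α aᵢ) (h q)`, where the
water level `h q` is chosen so that the coordinates sum to `q`. Between consecutive breakpoints
exactly the first `k + 1` coordinates are flooded; they rise together with slope `1 / (k + 1)` while
the others stay put, which gives (G2), and at a corner the coordinates that start rising are
already level with each other, which gives (G3). At `q = n a₁` we have `P(q) / q = a`, and at
`q = n aₙ` every coordinate of `P(q) / q` is `1 / n`. For every `q` the vector `P(q)` is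
nondecreasing while `P(q)ᵢ / aᵢ` is nonincreasing, and a weighted Chebyshev inequality turns these
into `ψⱼ(a) ≤ ψⱼ(P(q) / q) ≤ j / n`.
-/

open Set

theorem Finset.sum_mul_sum_le_sum_mul_sum_of_le_across {ι : Type*} [Fintype ι] [DecidableEq ι]
    (s : Finset ι) {w b : ι → ℝ} (hb : ∀ i, 0 ≤ b i) (hw : ∀ i ∈ s, ∀ l ∉ s, w l ≤ w i) :
    (∑ i ∈ s, b i) * ∑ i, w i * b i ≤ (∑ i ∈ s, w i * b i) * ∑ i, b i := by
  have hcross : (∑ i ∈ s, b i) * ∑ l ∈ sᶜ, w l * b l ≤ (∑ i ∈ s, w i * b i) * ∑ l ∈ sᶜ, b l := by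
    simp only [Finset.sum_mul_sum]
    refine Finset.sum_le_sum fun i hi => Finset.sum_le_sum fun l hl => ?_
    have := hw i hi l (Finset.mem_compl.1 hl)
    have := mul_nonneg (hb i) (hb l)
    nlinarith
  rw [← Finset.sum_add_sum_compl s (fun i => w i * b i), ← Finset.sum_add_sum_compl s b]
  nlinarith

theorem psiSum_eq_sum_filter (m j : ℕ) (x : Fin m → ℝ) :
    psiSum m j x = ∑ i ∈ Finset.univ.filter (fun i : Fin m => (i : ℕ) < j), x i :=
  (Finset.sum_filter _ _).symm

theorem psiSum_div (m j : ℕ) (x : Fin m → ℝ) (c : ℝ) :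
    psiSum m j (fun i => x i / c) = psiSum m j x / c := by
  simp only [psiSum_eq_sum_filter, Finset.sum_div]

theorem psiSum_const {m j : ℕ} (hj : j ≤ m) (c : ℝ) : psiSum m j (fun _ => c) = j * c := by
  simp [psiSum_eq_sum_filter, Fin.card_filter_val_lt, hj]

theorem psiSum_mul_sum_le_of_antitone {m : ℕ} (j : ℕ) {x b : Fin m → ℝ} (hb : ∀ i, 0 < b i)
    (hx : Antitone fun i => x i / b i) :
    psiSum m j b * ∑ i, x i ≤ psiSum m j x * ∑ i, b i := by
  have key := Finset.sum_mul_sum_le_sum_mul_sum_of_le_across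
    (Finset.univ.filter fun i : Fin m => (i : ℕ) < j) (fun i => (hb i).le)
    (w := fun i => x i / b i) fun i hi l hl => hx (by simp at hi hl; omega)
  simpa only [psiSum_eq_sum_filter, div_mul_cancel₀ _ (hb _).ne'] using key

theorem mul_psiSum_le_of_monotone {m j : ℕ} (hj : j ≤ m) {x : Fin m → ℝ} (hx : Monotone x) :
    m * psiSum m j x ≤ j * ∑ i, x i := by
  have key := Finset.sum_mul_sum_le_sum_mul_sum_of_le_across
    (Finset.univ.filter fun i : Fin m => (i : ℕ) < j) (fun _ => zero_le_one)
    (w := fun i => -x i) fun i hi l hl => neg_le_neg (hx (by simp at hi hl; omega))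
  simp only [Finset.sum_const, Fin.card_filter_val_lt, hj, inf_of_le_right, nsmul_eq_mul, mul_one,
    Finset.sum_neg_distrib, mul_neg, Finset.card_univ, Fintype.card_fin, neg_mul, neg_le_neg_iff]
    at key
  rw [psiSum_eq_sum_filter]
  linarith

theorem discreteIn_of_finite {D I : Set ℝ} (hD : D.Finite) (hDI : D ⊆ I) : DiscreteIn D I := by
  refine ⟨hDI, fun q _ => ?_⟩
  obtain ⟨ε, hε, hball⟩ :=
    Metric.isOpen_iff.1 (hD.sdiff (t := {q})).isClosed.isOpen_compl q (by simp)
  refine ⟨ε, hε, fun x ⟨hxD, hx⟩ => ?_⟩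
  by_contra hxq
  exact hball (by rwa [Real.ball_eq_Ioo]) ⟨hxD, hxq⟩

namespace WaterFilling

variable (f : ℕ → ℝ) (n : ℕ)

-- `level f n k q` is the common height of the first `k + 1` of the `n` slots when these are
-- flooded, the others stay at their floor `f i`, and the total is `q`. For a nondecreasing floor,
-- the total at height `c`, `∑ i, max (f i) c`, is the maximum over `k` of these affine totals, so
-- its inverse, the water level, is the minimum over `k` of the levels.
def level (k : ℕ) (q : ℝ) : ℝ := (q - ∑ i ∈ Finset.Ico (k + 1) n, f i) / (k + 1)

def waterLevel [NeZero n] (q : ℝ) : ℝ :=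
  Finset.univ.inf' Finset.univ_nonempty fun k : Fin n => level f n k q

def fill [NeZero n] (q : ℝ) (i : Fin n) : ℝ := max (f i) (waterLevel f n q)

def breakpoint (k : ℕ) : ℝ := ∑ i : Fin n, max (f i) (f k)

def fillDeriv (k : ℕ) (i : Fin n) : ℝ := if (i : ℕ) ≤ k then 1 / (k + 1) else 0

variable {f n}

theorem sum_ite_le_eq {k : ℕ} (hk : k < n) (c : ℝ) :
    ∑ i : Fin n, (if (i : ℕ) ≤ k then c else f i)
      = (k + 1) * c + ∑ i ∈ Finset.Ico (k + 1) n, f i := by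
  rw [Fin.sum_univ_eq_sum_range (fun i => if i ≤ k then c else f i),
    ← Finset.sum_range_add_sum_Ico _ hk]
  congr 1
  · rw [Finset.sum_congr rfl fun i hi => if_pos (Nat.lt_succ_iff.1 (Finset.mem_range.1 hi))]
    simp
  · exact Finset.sum_congr rfl fun i hi => if_neg (by simp at hi; omega)

theorem level_spec (k : ℕ) (q : ℝ) :
    (k + 1) * level f n k q + ∑ i ∈ Finset.Ico (k + 1) n, f i = q := by
  unfold level
  field_simp
  ring

theorem le_level_iff {k : ℕ} {q c : ℝ} :
    c ≤ level f n k q ↔ (k + 1) * c + ∑ i ∈ Finset.Ico (k + 1) n, f i ≤ q := by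
  rw [level, le_div_iff₀ (by positivity)]
  constructor <;> intro h <;> linarith

theorem level_mono (k : ℕ) : Monotone (level f n k) := fun _ _ h => by
  unfold level
  gcongr

theorem hasDerivAt_level (k : ℕ) (q : ℝ) : HasDerivAt (level f n k) (1 / (k + 1)) q :=
  ((hasDerivAt_id q).sub_const _).div_const ((k : ℝ) + 1)

theorem max_eq_ite_of_mem_Icc (hf : Monotone f) {k : ℕ} {c : ℝ} (hc : c ∈ Icc (f k) (f (k + 1)))
    (i : ℕ) : max (f i) c = if i ≤ k then c else f i := by
  split_ifs with hi
  · exact max_eq_right ((hf hi).trans hc.1)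
  · exact max_eq_left (hc.2.trans (hf (by omega)))

theorem sum_max_eq (hf : Monotone f) {k : ℕ} (hk : k < n) {c : ℝ} (hc : c ∈ Icc (f k) (f (k + 1))) :
    ∑ i : Fin n, max (f i) c = (k + 1) * c + ∑ i ∈ Finset.Ico (k + 1) n, f i := by
  simp only [max_eq_ite_of_mem_Icc hf hc]
  exact sum_ite_le_eq hk c

theorem level_sum_max (hf : Monotone f) {k : ℕ} (hk : k < n) {c : ℝ}
    (hc : c ∈ Icc (f k) (f (k + 1))) : level f n k (∑ i : Fin n, max (f i) c) = c := by
  rw [sum_max_eq hf hk hc, level]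
  field_simp
  ring

theorem level_breakpoint (hf : Monotone f) {k : ℕ} (hk : k < n) :
    level f n k (breakpoint f n k) = f k :=
  level_sum_max hf hk ⟨le_rfl, hf k.le_succ⟩

theorem level_breakpoint_succ (hf : Monotone f) {k : ℕ} (hk : k < n) :
    level f n k (breakpoint f n (k + 1)) = f (k + 1) :=
  level_sum_max hf hk ⟨hf k.le_succ, le_rfl⟩

theorem level_mem_Icc (hf : Monotone f) {k : ℕ} (hk : k < n) {q : ℝ}
    (hq : q ∈ Icc (breakpoint f n k) (breakpoint f n (k + 1))) :
    level f n k q ∈ Icc (f k) (f (k + 1)) := by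
  rw [← level_breakpoint hf hk, ← level_breakpoint_succ hf hk]
  exact ⟨level_mono k hq.1, level_mono k hq.2⟩

theorem breakpoint_mono (hf : Monotone f) : Monotone (breakpoint f n) := fun _ _ h =>
  Finset.sum_le_sum fun _ _ => max_le_max le_rfl (hf h)

theorem breakpoint_lt_succ (hf : Monotone f) {k : ℕ} (hk : k < n) (hfk : f k < f (k + 1)) :
    breakpoint f n k < breakpoint f n (k + 1) := by
  refine Finset.sum_lt_sum (fun _ _ => max_le_max le_rfl (hf k.le_succ))
    ⟨⟨0, by omega⟩, Finset.mem_univ _, ?_⟩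
  rwa [max_eq_right (hf (Nat.zero_le _)), max_eq_right (hf (Nat.zero_le _))]

section

variable [NeZero n]

theorem waterLevel_eq_level (hf : Monotone f) {k : ℕ} (hk : k < n) {q : ℝ}
    (hq : level f n k q ∈ Icc (f k) (f (k + 1))) : waterLevel f n q = level f n k q := by
  refine le_antisymm (Finset.inf'_le _ (Finset.mem_univ (⟨k, hk⟩ : Fin n)))
    (Finset.le_inf' _ _ fun m _ => ?_)
  rw [le_level_iff, ← sum_ite_le_eq m.isLt]
  -- flooding the first `m + 1` slots instead of the first `k + 1` can only lower the total
  calc ∑ i : Fin n, (if (i : ℕ) ≤ m then level f n k q else f i)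
      ≤ ∑ i : Fin n, max (f i) (level f n k q) :=
        Finset.sum_le_sum fun i _ => by split_ifs <;> simp
    _ = q := by rw [sum_max_eq hf hk hq, level_spec]

theorem fill_eq_ite (hf : Monotone f) {k : ℕ} (hk : k < n) {q : ℝ}
    (hq : q ∈ Icc (breakpoint f n k) (breakpoint f n (k + 1))) (i : Fin n) :
    fill f n q i = if (i : ℕ) ≤ k then level f n k q else f i := by
  rw [fill, waterLevel_eq_level hf hk (level_mem_Icc hf hk hq),
    max_eq_ite_of_mem_Icc hf (level_mem_Icc hf hk hq)]

theorem sum_fill (hf : Monotone f) {k : ℕ} (hk : k < n) {q : ℝ}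
    (hq : q ∈ Icc (breakpoint f n k) (breakpoint f n (k + 1))) : ∑ i, fill f n q i = q := by
  rw [Finset.sum_congr rfl fun i _ => fill_eq_ite hf hk hq i, sum_ite_le_eq hk, level_spec]

theorem waterLevel_breakpoint (hf : Monotone f) {k : ℕ} (hk : k ≤ n) :
    waterLevel f n (breakpoint f n k) = f k := by
  rcases k with _ | k
  · have h0 := level_breakpoint hf (NeZero.pos n)
    rw [waterLevel_eq_level hf (NeZero.pos n) (by rw [h0]; exact ⟨le_rfl, hf (Nat.zero_le 1)⟩), h0]
  · have h1 := level_breakpoint_succ hf hk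
    rw [waterLevel_eq_level hf hk (by rw [h1]; exact ⟨hf k.le_succ, le_rfl⟩), h1]

theorem fill_breakpoint (hf : Monotone f) {k : ℕ} (hk : k ≤ n) (i : Fin n) :
    fill f n (breakpoint f n k) i = max (f i) (f k) := by
  rw [fill, waterLevel_breakpoint hf hk]

theorem exists_mem_Icc_breakpoint (hf : Monotone f) {q : ℝ}
    (hq : q ∈ Icc (breakpoint f n 0) (breakpoint f n n)) :
    ∃ k < n, q ∈ Icc (breakpoint f n k) (breakpoint f n (k + 1)) := by
  rcases hq.1.eq_or_lt with h | h
  · exact ⟨0, NeZero.pos n, h.le, h ▸ breakpoint_mono hf (Nat.zero_le 1)⟩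
  · have hmem : q ∈ Ioc (breakpoint f n 0) (breakpoint f n n) := ⟨h, hq.2⟩
    rw [← (breakpoint_mono hf).biUnion_Ico_Ioc_map_succ] at hmem
    simp only [mem_iUnion, Order.succ_eq_add_one] at hmem
    obtain ⟨k, hk, hqk⟩ := hmem
    exact ⟨k, hk.2, Ioc_subset_Icc_self hqk⟩

theorem continuous_fill : Continuous (fill f n) :=
  continuous_pi fun _ => continuous_const.max <| Continuous.finset_inf'_apply _ fun k _ => by
    unfold level
    fun_prop

theorem hasDerivWithinAt_fill (hf : Monotone f) {k : ℕ} (hk : k < n) {q : ℝ}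
    (hq : q ∈ Icc (breakpoint f n k) (breakpoint f n (k + 1))) :
    HasDerivWithinAt (fill f n) (fillDeriv n k)
      (Icc (breakpoint f n k) (breakpoint f n (k + 1))) q := by
  have hmodel : HasDerivAt (fun x (i : Fin n) => if (i : ℕ) ≤ k then level f n k x else f i)
      (fillDeriv n k) q := by
    refine hasDerivAt_pi.2 fun i => ?_
    unfold fillDeriv
    split_ifs
    · exact hasDerivAt_level k q
    · exact hasDerivAt_const q _
  exact hmodel.hasDerivWithinAt.congr_of_mem (fun x hx => funext (fill_eq_ite hf hk hx)) hq

theorem hasDerivAt_fill (hf : Monotone f) {k : ℕ} (hk : k < n) {q : ℝ}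
    (hq : q ∈ Ioo (breakpoint f n k) (breakpoint f n (k + 1))) :
    HasDerivAt (fill f n) (fillDeriv n k) q :=
  (hasDerivWithinAt_fill hf hk (Ioo_subset_Icc_self hq)).hasDerivAt (Icc_mem_nhds hq.1 hq.2)

theorem hasDerivWithinAt_fill_Ici (hf : Monotone f) {k : ℕ} (hk : k < n)
    (hfk : f k < f (k + 1)) :
    HasDerivWithinAt (fill f n) (fillDeriv n k) (Ici (breakpoint f n k)) (breakpoint f n k) :=
  have hlt := breakpoint_lt_succ hf hk hfk
  (hasDerivWithinAt_fill hf hk (left_mem_Icc.2 hlt.le)).mono_of_mem_nhdsWithin (Icc_mem_nhdsGE hlt)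

theorem hasDerivWithinAt_fill_Iic (hf : Monotone f) {k : ℕ} (hk : k < n)
    (hfk : f k < f (k + 1)) :
    HasDerivWithinAt (fill f n) (fillDeriv n k) (Iic (breakpoint f n (k + 1)))
      (breakpoint f n (k + 1)) :=
  have hlt := breakpoint_lt_succ hf hk hfk
  (hasDerivWithinAt_fill hf hk (right_mem_Icc.2 hlt.le)).mono_of_mem_nhdsWithin (Icc_mem_nhdsLE hlt)

theorem not_differentiableAt_fill_breakpoint (hf : Monotone f) (hfs : ∀ k < n, f k < f (k + 1))
    {k : ℕ} (hk : k + 1 < n) : ¬DifferentiableAt ℝ (fill f n) (breakpoint f n (k + 1)) := by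
  intro hd
  have hleft := (uniqueDiffWithinAt_Iic _).eq_deriv _ hd.hasDerivAt.hasDerivWithinAt
    (hasDerivWithinAt_fill_Iic hf (k.lt_succ_self.trans hk) (hfs k (by omega)))
  have hright := (uniqueDiffWithinAt_Ici _).eq_deriv _ hd.hasDerivAt.hasDerivWithinAt
    (hasDerivWithinAt_fill_Ici hf hk (hfs _ hk))
  -- the flooded coordinate `0` rises with slope `1 / (k + 1)` before and `1 / (k + 2)` after
  have h0 := congrFun (hleft.symm.trans hright) ⟨0, by omega⟩
  simp only [fillDeriv, Nat.zero_le, if_true] at h0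
  rw [div_eq_div_iff (by positivity) (by positivity)] at h0
  push_cast at h0
  linarith

theorem not_differentiableAt_fill_of_mem_Ioo (hf : Monotone f) (hfs : ∀ k < n, f k < f (k + 1))
    {m : ℕ} (hm : m ≤ n) (hmem : breakpoint f n m ∈ Ioo (breakpoint f n 0) (breakpoint f n n)) :
    ¬DifferentiableAt ℝ (fill f n) (breakpoint f n m) := by
  obtain _ | k := m
  · exact absurd hmem.1 (lt_irrefl _)
  · rcases hm.lt_or_eq with hk | rfl
    · exact not_differentiableAt_fill_breakpoint hf hfs hk
    · exact absurd hmem.2 (lt_irrefl _)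

theorem exists_mem_Ioo_breakpoint (hf : Monotone f) (hfs : ∀ k < n, f k < f (k + 1)) {q : ℝ}
    (hq : q ∈ Ioo (breakpoint f n 0) (breakpoint f n n)) (hd : DifferentiableAt ℝ (fill f n) q) :
    ∃ k < n, q ∈ Ioo (breakpoint f n k) (breakpoint f n (k + 1)) := by
  obtain ⟨k, hk, hqk⟩ := exists_mem_Icc_breakpoint hf (Ioo_subset_Icc_self hq)
  refine ⟨k, hk, hqk.1.lt_of_ne ?_, hqk.2.lt_of_ne ?_⟩ <;> rintro rfl
  · exact not_differentiableAt_fill_of_mem_Ioo hf hfs hk.le hq hd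
  · exact not_differentiableAt_fill_of_mem_Ioo hf hfs hk hq hd

theorem exists_eq_breakpoint_of_not_differentiableAt (hf : Monotone f) {q : ℝ}
    (hq : q ∈ Ioo (breakpoint f n 0) (breakpoint f n n)) (hd : ¬DifferentiableAt ℝ (fill f n) q) :
    ∃ m < n, q = breakpoint f n m := by
  obtain ⟨k, hk, hqk⟩ := exists_mem_Icc_breakpoint hf (Ioo_subset_Icc_self hq)
  rcases hqk.1.eq_or_lt with h | h₁
  · exact ⟨k, hk, h.symm⟩
  rcases hqk.2.eq_or_lt with h | h₂
  · refine ⟨k + 1, (Nat.succ_le_of_lt hk).lt_of_ne ?_, h⟩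
    rintro rfl
    exact hq.2.ne h
  · exact absurd (hasDerivAt_fill hf hk ⟨h₁, h₂⟩).differentiableAt hd

theorem exists_subset_Ioo_breakpoint (hf : Monotone f) (hfs : ∀ k < n, f k < f (k + 1))
    {x y : ℝ} (hxy : x < y) (hsub : Ioo x y ⊆ Ioo (breakpoint f n 0) (breakpoint f n n))
    (hd : ∀ q ∈ Ioo x y, DifferentiableAt ℝ (fill f n) q) :
    ∃ k < n, Ioo x y ⊆ Ioo (breakpoint f n k) (breakpoint f n (k + 1)) := by
  have hz : (x + y) / 2 ∈ Ioo x y := ⟨by linarith, by linarith⟩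
  obtain ⟨k, hk, hzk⟩ := exists_mem_Ioo_breakpoint hf hfs (hsub hz) (hd _ hz)
  have hnot : ∀ m ≤ n, breakpoint f n m ∉ Ioo x y := fun m hm hmem =>
    not_differentiableAt_fill_of_mem_Ioo hf hfs hm (hsub hmem) (hd _ hmem)
  refine ⟨k, hk, fun p hp => ⟨?_, ?_⟩⟩
  · by_contra! h
    exact hnot k hk.le ⟨hp.1.trans_le h, hzk.1.trans hz.2⟩
  · by_contra! h
    exact hnot (k + 1) hk ⟨hz.1.trans hzk.2, h.trans_lt hp.2⟩

theorem nonDiffSet_fill_subset (hf : Monotone f) :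
    NonDiffSet n (Icc (breakpoint f n 0) (breakpoint f n n)) (fill f n)
      ⊆ breakpoint f n '' Iic n := by
  rintro q ⟨hq, hfr | hd⟩
  · rw [frontier_Icc (breakpoint_mono hf (Nat.zero_le n))] at hfr
    rcases hfr with rfl | rfl
    · exact ⟨0, Nat.zero_le n, rfl⟩
    · exact ⟨n, Set.mem_Iic.2 le_rfl, rfl⟩
  · obtain ⟨k, hk, hqk⟩ := exists_mem_Icc_breakpoint hf hq
    by_contra hne
    have hlo : breakpoint f n k ≠ q := fun h => hne ⟨k, hk.le, h⟩
    have hhi : breakpoint f n (k + 1) ≠ q := fun h => hne ⟨k + 1, hk, h⟩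
    exact hd (hasDerivAt_fill hf hk ⟨hqk.1.lt_of_ne hlo, hqk.2.lt_of_ne' hhi⟩).differentiableAt

theorem contPiecewiseLinearOn_fill (hf : Monotone f) (hfs : ∀ k < n, f k < f (k + 1)) :
    ContPiecewiseLinearOn n (Icc (breakpoint f n 0) (breakpoint f n n)) (fill f n) := by
  refine ⟨continuous_fill.continuousOn,
    discreteIn_of_finite (((finite_Iic n).image _).subset (nonDiffSet_fill_subset hf))
      fun _ hq => hq.1, fun q hq => ?_⟩
  have hint : q ∈ Ioo (breakpoint f n 0) (breakpoint f n n) := by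
    rw [← interior_Icc, ← self_sdiff_frontier]
    exact ⟨hq.1, fun h => hq.2 ⟨hq.1, Or.inl h⟩⟩
  have hd : DifferentiableAt ℝ (fill f n) q := by
    by_contra h
    exact hq.2 ⟨hq.1, Or.inr h⟩
  obtain ⟨k, hk, hqk⟩ := exists_mem_Ioo_breakpoint hf hfs hint hd
  obtain ⟨ε, hε, hball⟩ := Metric.isOpen_iff.1 isOpen_Ioo q hqk
  refine ⟨ε, hε, fun x hx => ?_⟩
  rw [← Real.ball_eq_Ioo] at hx
  rw [(hasDerivAt_fill hf hk (hball hx.2)).deriv, (hasDerivAt_fill hf hk hqk).deriv]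

theorem exists_rising_block (hf : Monotone f) (hfs : ∀ k < n, f k < f (k + 1))
    {x y : ℝ} (hxy : x < y) (hsub : Ioo x y ⊆ Icc (breakpoint f n 0) (breakpoint f n n))
    (hd : ∀ q ∈ Ioo x y, DifferentiableAt ℝ (fill f n) q) :
    ∃ rlo rhi : Fin n, rlo ≤ rhi ∧
      (∀ j : Fin n, rlo ≤ j → j ≤ rhi → ∀ q ∈ Ioo x y,
        fill f n q j = fill f n q rlo ∧
        deriv (fun x => fill f n x j) q = 1 / (((rhi : ℕ) : ℝ) - ((rlo : ℕ) : ℝ) + 1)) ∧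
      (∀ j : Fin n, j < rlo ∨ rhi < j →
        ∀ p ∈ Ioo x y, ∀ q ∈ Ioo x y, fill f n p j = fill f n q j) := by
  have hsub' : Ioo x y ⊆ Ioo (breakpoint f n 0) (breakpoint f n n) := by
    simpa only [interior_Icc] using interior_maximal hsub isOpen_Ioo
  obtain ⟨k, hk, hxyk⟩ := exists_subset_Ioo_breakpoint hf hfs hxy hsub' hd
  have hfill := fun q (hq : q ∈ Ioo x y) => fill_eq_ite hf hk (Ioo_subset_Icc_self (hxyk hq))
  refine ⟨⟨0, NeZero.pos n⟩, ⟨k, hk⟩, Nat.zero_le k, fun j _ hjk q hq => ⟨?_, ?_⟩, ?_⟩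
  · rw [hfill q hq, hfill q hq, if_pos (show (j : ℕ) ≤ k from hjk), if_pos (Nat.zero_le k)]
  · rw [(hasDerivAt_pi.1 (hasDerivAt_fill hf hk (hxyk hq)) j).deriv, fillDeriv,
      if_pos (show (j : ℕ) ≤ k from hjk)]
    simp
  · rintro j (hj | hj) p hp q hq
    · exact absurd hj (Fin.not_lt_zero _)
    · have hj' : ¬(j : ℕ) ≤ k := not_le.2 hj
      rw [hfill p hp, hfill q hq, if_neg hj', if_neg hj']

theorem fill_eq_of_not_differentiableAt (hf : Monotone f) (hfs : ∀ k < n, f k < f (k + 1)) {q : ℝ}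
    (hq : q ∈ interior (Icc (breakpoint f n 0) (breakpoint f n n)))
    (hd : ¬DifferentiableAt ℝ (fill f n) q) (rlo slo shi : Fin n) (hs : slo ≤ shi)
    (hright : derivWithin (fun x => fill f n x shi) (Ici q) q
      = 1 / (((shi : ℕ) : ℝ) - ((slo : ℕ) : ℝ) + 1)) (i : Fin n) (hi : rlo ≤ i)
    (hi' : i ≤ shi) : fill f n q i = fill f n q rlo := by
  rw [interior_Icc] at hq
  obtain ⟨m, hm, rfl⟩ := exists_eq_breakpoint_of_not_differentiableAt hf hq hd
  -- only flooded coordinates rise to the right of a corner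
  have hshi : (shi : ℕ) ≤ m := by
    by_contra! h
    rw [((hasDerivWithinAt_pi.1 (hasDerivWithinAt_fill_Ici hf hm (hfs m hm))) shi).derivWithin
      (uniqueDiffWithinAt_Ici _), fillDeriv, if_neg (not_le.2 h)] at hright
    have hslo : ((slo : ℕ) : ℝ) ≤ (shi : ℕ) := by exact_mod_cast hs
    exact (div_pos one_pos (by linarith)).ne' hright.symm
  have hmem : breakpoint f n m ∈ Icc (breakpoint f n m) (breakpoint f n (m + 1)) :=
    left_mem_Icc.2 (breakpoint_lt_succ hf hm (hfs m hm)).le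
  have hi'' : (i : ℕ) ≤ (shi : ℕ) := hi'
  have hri : (rlo : ℕ) ≤ (i : ℕ) := hi
  rw [fill_eq_ite hf hm hmem, fill_eq_ite hf hm hmem, if_pos (by omega), if_pos (by omega)]

theorem monotone_fill (hf : Monotone f) (q : ℝ) : Monotone (fill f n q) := fun _ _ hij =>
  max_le_max (hf hij) le_rfl

theorem isGenNSystem_fill (hf : Monotone f) (hfs : ∀ k < n, f k < f (k + 1)) (hf0 : 0 ≤ f 0) :
    IsGenNSystem n (Icc (breakpoint f n 0) (breakpoint f n n)) (fill f n) := by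
  refine ⟨contPiecewiseLinearOn_fill hf hfs,
    fun q hq => ⟨⟨fun i => le_max_of_le_left (hf0.trans (hf (Nat.zero_le _))), monotone_fill hf q⟩,
      ?_⟩,
    fun x y hxy hsub hd => exists_rising_block hf hfs hxy hsub hd,
    fun q hq hd rlo _ slo shi _ hs _ hright _ i hi hi' =>
      fill_eq_of_not_differentiableAt hf hfs hq hd rlo slo shi hs (hright shi hs le_rfl) i hi hi'⟩
  obtain ⟨k, hk, hqk⟩ := exists_mem_Icc_breakpoint hf hq
  exact sum_fill hf hk hqk

end

end WaterFilling

theorem antitoneOn_max_mul_div {α h : ℝ} (hα : 0 ≤ α) :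
    AntitoneOn (fun t => max (α * t) h / t) (Ioi 0) := by
  intro s (hs : 0 < s) t (ht : 0 < t) hst
  dsimp only
  rw [div_le_div_iff₀ ht hs, max_mul_of_nonneg _ _ hs.le]
  have hM := mul_le_mul_of_nonneg_right (le_max_left (α * s) h) ht.le
  refine max_le (by nlinarith) ?_
  rcases le_total 0 h with h0 | h0
  · nlinarith [mul_le_mul_of_nonneg_right (le_max_right (α * s) h) ht.le,
      mul_le_mul_of_nonneg_left hst h0]
  · nlinarith [mul_nonneg (mul_nonneg hα hs.le) ht.le]

namespace BasicSystem

open WaterFilling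

variable {n : ℕ} [NeZero n] {a : Fin n → ℝ}

-- the floor `α a` with `α = n a₁`, continued by the constant `aₙ` so that the last breakpoint
-- is `n aₙ`
variable (a) in
def floor (k : ℕ) : ℝ := if h : k < n then n * a 0 * a ⟨k, h⟩ else a ⊤

theorem natCast_mul_apply_zero_lt_one (hn : 2 ≤ n) (ha : a ∈ DeltaStrict n) : n * a 0 < 1 := by
  rw [← ha.2.2]
  calc (n : ℝ) * a 0 = ∑ _i : Fin n, a 0 := by simp
    _ < ∑ i, a i := Finset.sum_lt_sum (fun i _ => ha.2.1.monotone (Fin.zero_le i))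
        ⟨⟨1, by omega⟩, Finset.mem_univ _, ha.2.1 (Fin.lt_def.2 (by simp))⟩

theorem floor_coe (i : Fin n) : floor a i = n * a 0 * a i := dif_pos i.isLt

theorem floor_monotone (hn : 2 ≤ n) (ha : a ∈ DeltaStrict n) : Monotone (floor a) := by
  have hα := natCast_mul_apply_zero_lt_one hn ha
  have hα0 : 0 ≤ (n : ℝ) * a 0 := mul_nonneg (Nat.cast_nonneg n) (ha.1 0).le
  intro k l hkl
  unfold floor
  split_ifs with hk hl hl
  · exact mul_le_mul_of_nonneg_left (ha.2.1.monotone (Fin.mk_le_mk.2 hkl)) hα0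
  · exact (mul_le_of_le_one_left (ha.1 _).le hα.le).trans (ha.2.1.monotone le_top)
  · omega
  · exact le_rfl

theorem floor_lt_succ (hn : 2 ≤ n) (ha : a ∈ DeltaStrict n) {k : ℕ} (hk : k < n) :
    floor a k < floor a (k + 1) := by
  have hα := natCast_mul_apply_zero_lt_one hn ha
  have hα0 : 0 < (n : ℝ) * a 0 := mul_pos (by exact_mod_cast NeZero.pos n) (ha.1 0)
  unfold floor
  rw [dif_pos hk]
  split_ifs with hk1
  · exact mul_lt_mul_of_pos_left (ha.2.1 (Fin.mk_lt_mk.2 k.lt_succ_self)) hα0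
  · exact (mul_lt_of_lt_one_left (ha.1 _) hα).trans_le (ha.2.1.monotone le_top)

theorem floor_nonneg (ha : a ∈ DeltaStrict n) : 0 ≤ floor a 0 := by
  rw [floor, dif_pos (NeZero.pos n)]
  exact mul_nonneg (mul_nonneg (Nat.cast_nonneg n) (ha.1 0).le) (ha.1 _).le

theorem breakpoint_zero (hn : 2 ≤ n) (ha : a ∈ DeltaStrict n) :
    breakpoint (floor a) n 0 = n * a 0 := by
  calc ∑ i : Fin n, max (floor a i) (floor a 0) = ∑ i : Fin n, n * a 0 * a i :=
        Finset.sum_congr rfl fun i _ => by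
          rw [max_eq_left (floor_monotone hn ha (Nat.zero_le i)), floor_coe]
    _ = n * a 0 := by rw [← Finset.mul_sum, ha.2.2, mul_one]

theorem breakpoint_last (hn : 2 ≤ n) (ha : a ∈ DeltaStrict n) :
    breakpoint (floor a) n n = n * a ⊤ := by
  simp only [breakpoint, fun i : Fin n => max_eq_right (floor_monotone hn ha i.isLt.le)]
  simp [floor]

theorem fill_breakpoint_zero_div (hn : 2 ≤ n) (ha : a ∈ DeltaStrict n) :
    (fun i => fill (floor a) n (breakpoint (floor a) n 0) i / breakpoint (floor a) n 0) = a := by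
  have hα : (n : ℝ) * a 0 ≠ 0 := mul_ne_zero (by exact_mod_cast NeZero.ne n) (ha.1 0).ne'
  funext i
  rw [fill_breakpoint (floor_monotone hn ha) (Nat.zero_le n),
    max_eq_left (floor_monotone hn ha (Nat.zero_le _)), floor_coe, breakpoint_zero hn ha,
    mul_div_cancel_left₀ _ hα]

theorem fill_breakpoint_last_div (hn : 2 ≤ n) (ha : a ∈ DeltaStrict n) :
    (fun i => fill (floor a) n (breakpoint (floor a) n n) i / breakpoint (floor a) n n)
      = fun _ => 1 / (n : ℝ) := by
  funext i
  rw [fill_breakpoint (floor_monotone hn ha) le_rfl,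
    max_eq_right (floor_monotone hn ha i.isLt.le), breakpoint_last hn ha, floor,
    dif_neg (lt_irrefl n), div_mul_cancel_right₀ (ha.1 ⊤).ne', one_div]

theorem antitone_fill_div (ha : a ∈ DeltaStrict n) (q : ℝ) :
    Antitone fun i => fill (floor a) n q i / a i := fun i j hij => by
  simp only [fill, floor_coe]
  exact antitoneOn_max_mul_div (mul_nonneg (Nat.cast_nonneg n) (ha.1 0).le)
    (ha.1 i) (ha.1 j) (ha.2.1.monotone hij)

variable (a) in
def psiRatio (j : ℕ) (q : ℝ) : ℝ := psiSum n j (fun i => fill (floor a) n q i / q)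

theorem psiRatio_mem_Icc (hn : 2 ≤ n) (ha : a ∈ DeltaStrict n) {j : ℕ} (hj : j ≤ n)
    {q : ℝ} (hq : q ∈ Icc (breakpoint (floor a) n 0) (breakpoint (floor a) n n)) :
    psiRatio a j q ∈ Icc (psiSum n j a) (j / n) := by
  have hq0 : 0 < q := by
    refine lt_of_lt_of_le ?_ hq.1
    rw [breakpoint_zero hn ha]
    exact mul_pos (by exact_mod_cast NeZero.pos n) (ha.1 0)
  obtain ⟨k, hk, hqk⟩ := exists_mem_Icc_breakpoint (floor_monotone hn ha) hq
  have hsum := sum_fill (floor_monotone hn ha) hk hqk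
  rw [psiRatio, psiSum_div]
  constructor
  · have := psiSum_mul_sum_le_of_antitone j ha.1 (antitone_fill_div ha q)
    rw [hsum, ha.2.2, mul_one] at this
    rwa [le_div_iff₀ hq0]
  · have := mul_psiSum_le_of_monotone hj (monotone_fill (floor_monotone hn ha) q)
    rw [hsum] at this
    rw [div_le_div_iff₀ hq0 (by exact_mod_cast NeZero.pos n)]
    linarith

theorem isLeast_psiRatio (hn : 2 ≤ n) (ha : a ∈ DeltaStrict n) {j : ℕ} (hj : j ≤ n) :
    IsLeast (psiRatio a j '' Icc (breakpoint (floor a) n 0) (breakpoint (floor a) n n))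
      (psiSum n j a) := by
  refine ⟨⟨_, left_mem_Icc.2 (breakpoint_mono (floor_monotone hn ha) (Nat.zero_le n)), ?_⟩, ?_⟩
  · rw [psiRatio, fill_breakpoint_zero_div hn ha]
  · rintro _ ⟨q, hq, rfl⟩
    exact (psiRatio_mem_Icc hn ha hj hq).1

theorem isGreatest_psiRatio (hn : 2 ≤ n) (ha : a ∈ DeltaStrict n) {j : ℕ} (hj : j ≤ n) :
    IsGreatest (psiRatio a j '' Icc (breakpoint (floor a) n 0) (breakpoint (floor a) n n))
      (j / n) := by
  refine ⟨⟨_, right_mem_Icc.2 (breakpoint_mono (floor_monotone hn ha) (Nat.zero_le n)), ?_⟩, ?_⟩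
  · rw [psiRatio, fill_breakpoint_last_div hn ha, psiSum_const hj, mul_one_div]
  · rintro _ ⟨q, hq, rfl⟩
    exact (psiRatio_mem_Icc hn ha hj hq).2

end BasicSystem

open WaterFilling BasicSystem

/-- Proposition 5.1: for `a ∈ Δ⁽ⁿ⁾` there is a generalized `n`-system `P` on
`[na₁, na_n]` with `inf_q ψ_j(q⁻¹P(q)) = ψ_j(a)` and `sup_q ψ_j(q⁻¹P(q)) = j/n`
for `j = 1,…,n-1`. -/
theorem exists_gen_nsystem_basic (n : ℕ) (hn : 2 ≤ n)
    (a : Fin n → ℝ) (ha : a ∈ DeltaStrict n) :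
    ∃ P : ℝ → Fin n → ℝ,
      IsGenNSystem n (Set.Icc (n * a ⟨0, by omega⟩) (n * a ⟨n - 1, by omega⟩)) P ∧
      ∀ j : ℕ, 1 ≤ j → j ≤ n - 1 →
        sInf ((fun q : ℝ => psiSum n j (fun i => P q i / q)) ''
            Set.Icc (n * a ⟨0, by omega⟩) (n * a ⟨n - 1, by omega⟩))
          = psiSum n j a ∧
        sSup ((fun q : ℝ => psiSum n j (fun i => P q i / q)) ''
            Set.Icc (n * a ⟨0, by omega⟩) (n * a ⟨n - 1, by omega⟩))
          = (j : ℝ) / n := by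
  have : NeZero n := ⟨by omega⟩
  have hI : Set.Icc ((n : ℝ) * a ⟨0, by omega⟩) (n * a ⟨n - 1, by omega⟩)
      = Set.Icc (breakpoint (floor a) n 0) (breakpoint (floor a) n n) := by
    rw [breakpoint_zero hn ha, breakpoint_last hn ha]
    rfl
  refine ⟨fill (floor a) n, hI ▸ isGenNSystem_fill (floor_monotone hn ha)
    (fun k hk => floor_lt_succ hn ha hk) (floor_nonneg ha), fun j _ hj => ?_⟩
  rw [hI]
  exact ⟨(isLeast_psiRatio hn ha (by omega)).csInf_eq,
    (isGreatest_psiRatio hn ha (by omega)).csSup_eq⟩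

end
end

section
/- Let n ≥ 1 be an integer. Suppose that ψ̲₁, …, ψ̲_n ∈ [0, 1] satisfy ψ̲_n ≤ n/(n+1) and, for each j with 1 ≤ j ≤ n−1, ψ̲_j/j ≤ ψ̲_{j+1}/(j+1) and (1 − ψ̲_j)/(n+1−j) ≤ (1 − ψ̲_{j+1})/(n−j). Then there exists a finite non-empty subset E of Δ̄^(n+1) such that ψ̲_j = min ψ_j(E) for each j = 1, …, n. -/
/-!
Take `E = {a⁽¹⁾, …, a⁽ⁿ⁾}`, where `a⁽ʲ⁾` spreads the mass `ψ̲_j` evenly over its first `j`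
coordinates and `1 - ψ̲_j` evenly over the remaining `n + 1 - j`, so that `ψ_j(a⁽ʲ⁾) = ψ̲_j`.
The hypotheses say that both levels `ψ̲_j / j` and `(1 - ψ̲_j) / (n + 1 - j)` increase with `j`.
For `k ≤ j` this gives `ψ_k(a⁽ʲ⁾) = k ψ̲_j / j ≥ ψ̲_k`; for `k ≥ j` it gives
`ψ_k(a⁽ʲ⁾) = 1 - (n + 1 - k)(1 - ψ̲_j) / (n + 1 - j) ≥ ψ̲_k`.
-/

noncomputable section

open Set

def stepVec (m j : ℕ) (c d : ℝ) : Fin m → ℝ := fun i => if (i : ℕ) < j then c else d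

lemma sum_ite_val_lt (m k : ℕ) (c : ℝ) :
    ∑ i : Fin m, (if (i : ℕ) < k then c else 0) = (min m k : ℕ) * c := by
  rw [Finset.sum_ite, Finset.sum_const_zero, add_zero, Finset.sum_const, Fin.card_filter_val_lt,
    nsmul_eq_mul]

lemma psiSum_stepVec {m k : ℕ} (j : ℕ) (c d : ℝ) (hk : k ≤ m) :
    psiSum m k (stepVec m j c d) = (min j k : ℕ) * c + (k - (min j k : ℕ)) * d := by
  have hterm : ∀ i : Fin m, (if (i : ℕ) < k then stepVec m j c d i else 0) =
      (if (i : ℕ) < min j k then c else 0) + (if (i : ℕ) < k then d else 0) -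
        (if (i : ℕ) < min j k then d else 0) := by
    intro i
    simp only [stepVec]
    split_ifs <;> first | ring1 | omega
  simp only [psiSum, hterm, Finset.sum_sub_distrib, Finset.sum_add_distrib, sum_ite_val_lt,
    min_eq_right hk, min_eq_right ((min_le_right j k).trans hk)]
  ring

lemma psiSum_self (m : ℕ) (x : Fin m → ℝ) : psiSum m m x = ∑ i, x i :=
  Finset.sum_congr rfl fun i _ => if_pos i.isLt

lemma stepVec_mem_deltaBar {m j : ℕ} {c d : ℝ} (hj : j ≤ m) (hc : 0 ≤ c) (hcd : c ≤ d)
    (hsum : j * c + (m - j : ℝ) * d = 1) : stepVec m j c d ∈ DeltaBar m := by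
  refine ⟨fun i => ?_, fun i i' hii' => ?_, ?_⟩
  · unfold stepVec
    split_ifs
    exacts [hc, hc.trans hcd]
  · have : (i : ℕ) ≤ i' := hii'
    unfold stepVec
    split_ifs
    exacts [le_rfl, hcd, absurd this (by omega), le_rfl]
  · rw [← psiSum_self, psiSum_stepVec j c d le_rfl, min_eq_left hj, hsum]

section Realization

variable {n j k : ℕ} {ψ : ℕ → ℝ}

def headLevel (ψ : ℕ → ℝ) (j : ℕ) : ℝ := ψ j / j

def tailLevel (n : ℕ) (ψ : ℕ → ℝ) (j : ℕ) : ℝ := (1 - ψ j) / ((n : ℝ) + 1 - j)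

def levelVec (n : ℕ) (ψ : ℕ → ℝ) (j : ℕ) : Fin (n + 1) → ℝ :=
  stepVec (n + 1) j (headLevel ψ j) (tailLevel n ψ j)

lemma tailLevel_denom_pos (hj : j ≤ n) : 0 < (n : ℝ) + 1 - j := by
  have : (j : ℝ) ≤ n := by exact_mod_cast hj
  linarith

lemma mul_headLevel (hj : j ≠ 0) : (j : ℝ) * headLevel ψ j = ψ j :=
  mul_div_cancel₀ _ (Nat.cast_ne_zero.2 hj)

lemma mul_tailLevel (hj : j ≤ n) : ((n : ℝ) + 1 - j) * tailLevel n ψ j = 1 - ψ j :=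
  mul_div_cancel₀ _ (tailLevel_denom_pos hj).ne'

lemma monotoneOn_headLevel
    (h : ∀ j : ℕ, 1 ≤ j → j ≤ n - 1 → ψ j / (j : ℝ) ≤ ψ (j + 1) / ((j : ℝ) + 1)) :
    MonotoneOn (headLevel ψ) (Icc 1 n) := by
  refine monotoneOn_of_le_succ ordConnected_Icc fun j _ hj hj' => ?_
  rw [Order.succ_eq_add_one] at hj' ⊢
  simpa only [headLevel, Nat.cast_add, Nat.cast_one] using h j hj.1 (Nat.le_sub_one_of_lt hj'.2)

lemma monotoneOn_tailLevel
    (h : ∀ j : ℕ, 1 ≤ j → j ≤ n - 1 →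
      (1 - ψ j) / ((n : ℝ) + 1 - (j : ℝ)) ≤ (1 - ψ (j + 1)) / ((n : ℝ) - (j : ℝ))) :
    MonotoneOn (tailLevel n ψ) (Icc 1 n) := by
  refine monotoneOn_of_le_succ ordConnected_Icc fun j _ hj hj' => ?_
  rw [Order.succ_eq_add_one] at hj' ⊢
  have hdenom : (n : ℝ) + 1 - ((j + 1 : ℕ) : ℝ) = n - j := by push_cast; ring
  simpa only [tailLevel, hdenom] using h j hj.1 (Nat.le_sub_one_of_lt hj'.2)

lemma headLevel_le_of_mem_Icc (hhead : MonotoneOn (headLevel ψ) (Icc 1 n))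
    (hlast : ψ n ≤ (n : ℝ) / ((n : ℝ) + 1)) (hj : j ∈ Icc 1 n) :
    headLevel ψ j ≤ 1 / ((n : ℝ) + 1) := by
  have hn : (0 : ℝ) < n := by exact_mod_cast hj.1.trans hj.2
  refine (hhead hj ⟨hj.1.trans hj.2, le_rfl⟩ hj.2).trans ?_
  rwa [headLevel, div_le_iff₀ hn, one_div_mul_eq_div]

lemma le_tailLevel (hj : j ∈ Icc 1 n) (hhead : headLevel ψ j ≤ 1 / ((n : ℝ) + 1)) :
    1 / ((n : ℝ) + 1) ≤ tailLevel n ψ j := by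
  rw [tailLevel, le_div_iff₀ (tailLevel_denom_pos hj.2),
    ← mul_headLevel (ψ := ψ) (Nat.one_le_iff_ne_zero.1 hj.1)]
  have hmul : (j : ℝ) * headLevel ψ j ≤ j * (1 / ((n : ℝ) + 1)) :=
    mul_le_mul_of_nonneg_left hhead j.cast_nonneg
  have : 1 / ((n : ℝ) + 1) * ((n : ℝ) + 1 - j) = 1 - j * (1 / ((n : ℝ) + 1)) := by
    field_simp
  linarith

lemma levelVec_mem_deltaBar (hj : j ∈ Icc 1 n) (h0 : 0 ≤ headLevel ψ j)
    (hle : headLevel ψ j ≤ tailLevel n ψ j) : levelVec n ψ j ∈ DeltaBar (n + 1) := by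
  refine stepVec_mem_deltaBar (hj.2.trans n.le_succ) h0 hle ?_
  rw [mul_headLevel (Nat.one_le_iff_ne_zero.1 hj.1), Nat.cast_succ, mul_tailLevel hj.2]
  ring

lemma psiSum_levelVec_of_le (hkj : k ≤ j) (hj : j ≤ n) :
    psiSum (n + 1) k (levelVec n ψ j) = k * headLevel ψ j := by
  rw [levelVec, psiSum_stepVec _ _ _ (by omega), min_eq_right hkj]
  ring

lemma psiSum_levelVec_of_ge (hjk : j ≤ k) (hk : k ≤ n) (hj : j ≠ 0) :
    psiSum (n + 1) k (levelVec n ψ j) = 1 - ((n : ℝ) + 1 - k) * tailLevel n ψ j := by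
  rw [levelVec, psiSum_stepVec _ _ _ (by omega), min_eq_left hjk, mul_headLevel hj]
  linear_combination mul_tailLevel (ψ := ψ) (hjk.trans hk)

lemma le_psiSum_levelVec (hhead : MonotoneOn (headLevel ψ) (Icc 1 n))
    (htail : MonotoneOn (tailLevel n ψ) (Icc 1 n)) (hj : j ∈ Icc 1 n) (hk : k ∈ Icc 1 n) :
    ψ k ≤ psiSum (n + 1) k (levelVec n ψ j) := by
  rcases le_total k j with hkj | hjk
  · rw [psiSum_levelVec_of_le hkj hj.2, ← mul_headLevel (ψ := ψ) (Nat.one_le_iff_ne_zero.1 hk.1)]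
    exact mul_le_mul_of_nonneg_left (hhead hk hj hkj) k.cast_nonneg
  · rw [psiSum_levelVec_of_ge hjk hk.2 (Nat.one_le_iff_ne_zero.1 hj.1)]
    have := mul_le_mul_of_nonneg_left (htail hj hk hjk) (tailLevel_denom_pos hk.2).le
    linarith [mul_tailLevel (ψ := ψ) hk.2]

end Realization

/-- Proposition 6.1: if `ψ̲₁,…,ψ̲_n ∈ [0,1]` satisfy `ψ̲_n ≤ n/(n+1)`,
`ψ̲_j/j ≤ ψ̲_{j+1}/(j+1)` and `(1-ψ̲_j)/(n+1-j) ≤ (1-ψ̲_{j+1})/(n-j)`, then there is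
a finite nonempty subset `E` of `Δ̄⁽ⁿ⁺¹⁾` with `ψ̲_j = min ψ_j(E)` for `j = 1,…,n`. -/
theorem exists_finite_set_realizing_psi (n : ℕ) (hn : 1 ≤ n) (ψ : ℕ → ℝ)
    (h01 : ∀ j : ℕ, 1 ≤ j → j ≤ n → 0 ≤ ψ j ∧ ψ j ≤ 1)
    (hlast : ψ n ≤ (n : ℝ) / ((n : ℝ) + 1))
    (hineq : ∀ j : ℕ, 1 ≤ j → j ≤ n - 1 →
      ψ j / (j : ℝ) ≤ ψ (j + 1) / ((j : ℝ) + 1) ∧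
      (1 - ψ j) / ((n : ℝ) + 1 - (j : ℝ)) ≤ (1 - ψ (j + 1)) / ((n : ℝ) - (j : ℝ))) :
    ∃ E : Set (Fin (n + 1) → ℝ), E.Finite ∧ E.Nonempty ∧ E ⊆ DeltaBar (n + 1) ∧
      ∀ j : ℕ, 1 ≤ j → j ≤ n → IsLeast (psiSum (n + 1) j '' E) (ψ j) := by
  have hhead := monotoneOn_headLevel fun j h1 h2 => (hineq j h1 h2).1
  have htail := monotoneOn_tailLevel fun j h1 h2 => (hineq j h1 h2).2
  refine ⟨levelVec n ψ '' Icc 1 n, (finite_Icc 1 n).image _, (nonempty_Icc.2 hn).image _,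
    ?_, fun k hk1 hkn => ⟨⟨_, mem_image_of_mem _ ⟨hk1, hkn⟩, ?_⟩, ?_⟩⟩
  · rintro _ ⟨j, hj, rfl⟩
    have hbound := headLevel_le_of_mem_Icc hhead hlast hj
    exact levelVec_mem_deltaBar hj (div_nonneg (h01 j hj.1 hj.2).1 j.cast_nonneg)
      (hbound.trans (le_tailLevel hj hbound))
  · rw [psiSum_levelVec_of_le le_rfl hkn, mul_headLevel (by omega)]
  · rintro _ ⟨_, ⟨j, hj, rfl⟩, rfl⟩
    exact le_psiSum_levelVec hhead htail hj ⟨hk1, hkn⟩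

end
end
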